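/- Let G be a simple graph with n vertices and list chromatic number χ_ℓ = s, and let 1 ≤ r ≤ s. Then λ_r(G) ≥ n / ⌈s/r⌉, i.e., ⌈s/r⌉ · λ_r(G) ≥ n. -/

import Mathlib

/-!
Given an `r`-list assignment `L` and `q = ⌈s/r⌉`, give every vertex the list `{0, …, q-1} × L v`
of size `q r ≥ s`. Since `G` is `s`-choosable it has a proper coloring `v ↦ (i v, c v)` from these
lists; each layer `{v | i v = i}` is then properly colored by `c` from `L`, so it has at most
`λ_L(G)` vertices, and the `q` layers cover all `n` vertices.
-/

open SimpleGraph

/-- `c` properly colors each vertex of `S` from its list `L`. -/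
def IsPartialListColoring {V : Type*} (G : SimpleGraph V) (L : V → Finset ℕ)
    (S : Set V) (c : V → ℕ) : Prop :=
  (∀ v ∈ S, c v ∈ L v) ∧ ∀ u ∈ S, ∀ v ∈ S, G.Adj u v → c u ≠ c v

/-- `λ_L(G)`: the maximum number of vertices properly colorable from the lists of `L`. -/
noncomputable def lamL {V : Type*} (G : SimpleGraph V) (L : V → Finset ℕ) : ℕ :=
  sSup {k | ∃ (S : Finset V) (c : V → ℕ), S.card = k ∧ IsPartialListColoring G L S c}

/-- `λ_t(G)`: the minimum of `λ_L(G)` over all `t`-list assignments `L`. -/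
noncomputable def lam {V : Type*} (G : SimpleGraph V) (t : ℕ) : ℕ :=
  sInf {m | ∃ L : V → Finset ℕ, (∀ v, (L v).card = t) ∧ lamL G L = m}

/-- `G` admits a full proper coloring from the lists of `L`. -/
def ListColorable {V : Type*} (G : SimpleGraph V) (L : V → Finset ℕ) : Prop :=
  ∃ c : V → ℕ, (∀ v, c v ∈ L v) ∧ ∀ u v, G.Adj u v → c u ≠ c v

/-- The list chromatic number of `G`. -/
noncomputable def listChromaticNumber {V : Type*} (G : SimpleGraph V) : ℕ :=
  sInf {k | ∀ L : V → Finset ℕ, (∀ v, (L v).card = k) → ListColorable G L}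

open Finset

def IsChoosable {V : Type*} (G : SimpleGraph V) (k : ℕ) : Prop :=
  ∀ L : V → Finset ℕ, (∀ v, (L v).card = k) → ListColorable G L

section

variable {V : Type*} {G : SimpleGraph V}

theorem isChoosable_listChromaticNumber (h : 0 < listChromaticNumber G) :
    IsChoosable G (listChromaticNumber G) :=
  Nat.sInf_mem (Nat.nonempty_of_pos_sInf h)

theorem IsChoosable.listColorable_of_le {k : ℕ} (hG : IsChoosable G k) {L : V → Finset ℕ}
    (hL : ∀ v, k ≤ (L v).card) : ListColorable G L := by
  choose T hTL hT using fun v => exists_subset_card_eq (hL v)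
  obtain ⟨c, hcT, hc⟩ := hG T hT
  exact ⟨c, fun v => hTL v (hcT v), hc⟩

theorem exists_lamL_eq_lam (G : SimpleGraph V) (t : ℕ) :
    ∃ L : V → Finset ℕ, (∀ v, (L v).card = t) ∧ lamL G L = lam G t :=
  Nat.sInf_mem (s := {m | ∃ L : V → Finset ℕ, (∀ v, (L v).card = t) ∧ lamL G L = m})
    ⟨_, fun _ => range t, fun _ => card_range t, rfl⟩

theorem IsPartialListColoring.card_le_lamL [Fintype V] {L : V → Finset ℕ} {S : Finset V}
    {c : V → ℕ} (h : IsPartialListColoring G L S c) : S.card ≤ lamL G L := by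
  refine le_csSup ⟨Fintype.card V, ?_⟩ ⟨S, c, rfl, h⟩
  rintro k ⟨T, -, rfl, -⟩
  exact card_le_univ T

def layeredLists (q : ℕ) (L : V → Finset ℕ) (v : V) : Finset ℕ :=
  (range q ×ˢ L v).map Nat.pairEquiv.toEmbedding

theorem card_layeredLists (q : ℕ) (L : V → Finset ℕ) (v : V) :
    (layeredLists q L v).card = q * (L v).card := by
  rw [layeredLists, card_map, card_product, card_range]

theorem mem_layeredLists {q : ℕ} {L : V → Finset ℕ} {v : V} {n : ℕ} :
    n ∈ layeredLists q L v ↔ n.unpair.1 < q ∧ n.unpair.2 ∈ L v := by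
  rw [layeredLists, mem_map_equiv, mem_product, mem_range]
  rfl

theorem ListColorable.card_le_mul_lamL [Fintype V] {q : ℕ} {L : V → Finset ℕ}
    (h : ListColorable G (layeredLists q L)) : Fintype.card V ≤ q * lamL G L := by
  classical
  obtain ⟨c, hcL, hc⟩ := h
  have layer_lt : ∀ v ∈ univ, (c v).unpair.1 ∈ range q :=
    fun v _ => mem_range.2 (mem_layeredLists.1 (hcL v)).1
  have layer_card_le : ∀ i ∈ range q, #{v | (c v).unpair.1 = i} ≤ lamL G L := by
    intro i _
    refine IsPartialListColoring.card_le_lamL (c := fun v => (c v).unpair.2)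
      ⟨fun v _ => (mem_layeredLists.1 (hcL v)).2, fun u hu v hv huv hcuv => hc u v huv ?_⟩
    simp only [coe_filter, mem_univ, true_and, Set.mem_ofPred_eq] at hu hv
    rw [← Nat.pair_unpair (c u), ← Nat.pair_unpair (c v), hu, hv]
    exact congrArg _ hcuv
  simpa [mul_comm] using card_le_mul_card_image_of_maps_to layer_lt _ layer_card_le

end

theorem lam_ge_card_div_ceil {V : Type*} [Fintype V] (G : SimpleGraph V)
    (r s : ℕ) (hs : listChromaticNumber G = s) (hr : 1 ≤ r) (hrs : r ≤ s) :
    Fintype.card V ≤ (s ⌈/⌉ r) * lam G r := by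
  have hG : IsChoosable G s := hs ▸ isChoosable_listChromaticNumber (hs ▸ hr.trans hrs)
  obtain ⟨L, hL, hLlam⟩ := exists_lamL_eq_lam G r
  rw [← hLlam]
  refine ListColorable.card_le_mul_lamL (hG.listColorable_of_le fun v => ?_)
  rw [card_layeredLists, hL, mul_comm]
  exact (gc_mul_ceilDiv hr).le_u_l s
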